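/- arXiv:2512.04486 — 4 statements merged into one kernel-verified Lean document; each statement's English description precedes it below -/
import Mathlib

section
/- Let G be a finite simple graph, u, v ∈ V(G) with u ≠ v, and σ a face of Δᵗ₂(G). If σ ∈ 𝒞 and u is adjacent to every vertex w ∈ (σ ∪ {v})^c, then σ ∖ {u} ∈ 𝒞. -/
/-- The total 2-cut complex of a finite simple graph `G`: the faces are the subsets
`σ` of the vertex set whose complement `σᶜ` contains a "disconnected 2-set", i.e.
two distinct nonadjacent vertices. -/
def totalCut2 {V : Type*} [Fintype V] [DecidableEq V] (G : SimpleGraph V) :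
    Set (Finset V) :=
  {σ | ∃ u v : V, u ∉ σ ∧ v ∉ σ ∧ u ≠ v ∧ ¬ G.Adj u v}

/-- For a fixed vertex `v`, the element matching `M_v` pairs `σ∖{v}` with `σ∪{v}`
whenever both are faces of the total 2-cut complex.  `criticalSet G v` (the set `𝒞`)
consists of the faces of the total 2-cut complex lying in no pair of `M_v`;
a face `σ` lies in a pair of `M_v` exactly when both `σ∖{v}` and `σ∪{v}` are faces. -/
def criticalSet {V : Type*} [Fintype V] [DecidableEq V] (G : SimpleGraph V) (v : V) :
    Set (Finset V) :=
  {σ ∈ totalCut2 G | ¬(σ.erase v ∈ totalCut2 G ∧ insert v σ ∈ totalCut2 G)}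


theorem totalCut2_mono {V : Type*} [Fintype V] [DecidableEq V] (G : SimpleGraph V)
    {τ σ : Finset V} (h : τ ⊆ σ) (hσ : σ ∈ totalCut2 G) : τ ∈ totalCut2 G := by
  obtain ⟨a, b, ha, hb, hab, hnadj⟩ := hσ
  exact ⟨a, b, fun h' => ha (h h'), fun h' => hb (h h'), hab, hnadj⟩

/-- Proposition 3.3(iii): if `σ ∈ 𝒞` and `u` is adjacent to every vertex `w` of
the complement of `σ ∪ {v}`, then `σ ∖ {u} ∈ 𝒞`. -/
theorem stmt6 {V : Type*} [Fintype V] [DecidableEq V] (G : SimpleGraph V)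
    (u v : V) (huv : u ≠ v) (σ : Finset V) (hσ : σ ∈ totalCut2 G)
    (hC : σ ∈ criticalSet G v)
    (hadj : ∀ w : V, w ∉ σ → w ≠ v → G.Adj u w) :
    σ.erase u ∈ criticalSet G v := by
  obtain ⟨hface, hnot⟩ := hC
  have hins : insert v σ ∉ totalCut2 G := fun h =>
    hnot ⟨totalCut2_mono G (Finset.erase_subset v σ) hσ, h⟩
  refine ⟨totalCut2_mono G (Finset.erase_subset u σ) hσ, ?_⟩
  rintro ⟨-, a, b, ha, hb, hab, hnadj⟩
  have hav : a ≠ v := fun h => ha (by simp [h])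
  have hbv : b ≠ v := fun h => hb (by simp [h])
  have ha' : a ∉ σ.erase u := fun h => ha (Finset.mem_insert_of_mem h)
  have hb' : b ∉ σ.erase u := fun h => hb (Finset.mem_insert_of_mem h)
  by_cases hau : a = u
  · subst hau
    have hbσ : b ∉ σ := fun h => hb' (Finset.mem_erase.mpr ⟨fun e => hab e.symm, h⟩)
    exact hnadj (hadj b hbσ hbv)
  · have haσ : a ∉ σ := fun h => ha' (Finset.mem_erase.mpr ⟨hau, h⟩)
    by_cases hbu : b = u
    · subst hbu
      exact hnadj ((hadj a haσ hav).symm)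
    · have hbσ : b ∉ σ := fun h => hb' (Finset.mem_erase.mpr ⟨hbu, h⟩)
      exact hins ⟨a, b, by simp [hav, haσ], by simp [hbv, hbσ], hab, hnadj⟩
end

section
/- Let p ≥ 1 and n = 2p+2. Then 𝒞_{p+1} = { {1, 2, …, p} }, i.e. the set {1,…,p} is the unique face of Δᵗ₂(C_{2p+2}^p) surviving to 𝒞_{p+1}. -/
/-- Adjacency in the `p`-th power `C_n^p` of the cycle graph `C_n`, viewed on the
vertex set `{0, 1, …, n-1} ⊆ ℕ`: distinct `u, v < n` are adjacent iff
`v ≡ u ± t (mod n)` for some `1 ≤ t ≤ p`. -/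
def adjCnp (n p : ℕ) (u v : ℕ) : Prop :=
  u < n ∧ v < n ∧ u ≠ v ∧
    ∃ t, 1 ≤ t ∧ t ≤ p ∧ ((u + t) % n = v ∨ (v + t) % n = u)

/-- The total 2-cut complex `Δᵗ₂(C_n^p)`: faces are the `σ ⊆ {0,…,n-1}` whose
complement `σᶜ = {0,…,n-1} ∖ σ` contains a disconnected 2-set, i.e. two distinct
nonadjacent vertices. -/
def facesCnp (n p : ℕ) : Set (Finset ℕ) :=
  {σ | σ ⊆ Finset.range n ∧
    ∃ u ∈ Finset.range n \ σ, ∃ v ∈ Finset.range n \ σ, u ≠ v ∧ ¬ adjCnp n p u v}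

/-- The sequence `𝒞₀, 𝒞₁, …` of sets of faces of `Δᵗ₂(C_n^p)` obtained from the
sequence of element matchings using the vertices `0, 1, …`: `𝒞₀` is the set of all
faces, and `𝒞_{i+1}` consists of those `σ ∈ 𝒞_i` lying in no pair of the matching
`M_i = { {σ∖{i}, σ∪{i}} : both σ∖{i} ∈ 𝒞_i and σ∪{i} ∈ 𝒞_i }`
(a face `σ` lies in such a pair iff both `σ∖{i} ∈ 𝒞_i` and `σ∪{i} ∈ 𝒞_i`). -/
def matchSeqCnp (n p : ℕ) : ℕ → Set (Finset ℕ)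
  | 0 => facesCnp n p
  | (i + 1) => {σ ∈ matchSeqCnp n p i |
      ¬(σ.erase i ∈ matchSeqCnp n p i ∧ insert i σ ∈ matchSeqCnp n p i)}

lemma mem_matchSeq_succ (n p i : ℕ) (σ : Finset ℕ) :
    σ ∈ matchSeqCnp n p (i+1) ↔ σ ∈ matchSeqCnp n p i ∧
      ¬(σ.erase i ∈ matchSeqCnp n p i ∧ insert i σ ∈ matchSeqCnp n p i) := Iff.rfl

lemma mod_two_mul (a n : ℕ) (_hn : 0 < n) (h : a < 2 * n) :
    a % n = if a < n then a else a - n := by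
  split_ifs with h1
  · exact Nat.mod_eq_of_lt h1
  · rw [Nat.mod_eq_sub_mod (by omega)]
    exact Nat.mod_eq_of_lt (by omega)

lemma adj_iff (p u v : ℕ) (hu : u < 2*p+2) (hv : v < 2*p+2) (huv : u ≠ v) :
    adjCnp (2*p+2) p u v ↔ ¬(u + (p+1) = v ∨ v + (p+1) = u) := by
  constructor
  · rintro ⟨-, -, -, t, ht1, ht2, h | h⟩ hanti
    · rw [mod_two_mul _ _ (by omega) (by omega)] at h
      split_ifs at h <;> omega
    · rw [mod_two_mul _ _ (by omega) (by omega)] at h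
      split_ifs at h <;> omega
  · intro h
    refine ⟨hu, hv, huv, ?_⟩
    rcases Nat.lt_or_ge u v with hlt | hge
    · rcases Nat.lt_or_ge (v - u) (p+1) with hd | hd
      · refine ⟨v - u, by omega, by omega, Or.inl ?_⟩
        have e : u + (v - u) = v := by omega
        rw [e, Nat.mod_eq_of_lt hv]
      · refine ⟨2*p+2 - (v-u), by omega, by omega, Or.inr ?_⟩
        have e : v + (2*p+2 - (v-u)) = u + (2*p+2) := by omega
        rw [e, Nat.add_mod_right, Nat.mod_eq_of_lt hu]
    · rcases Nat.lt_or_ge (u - v) (p+1) with hd | hd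
      · refine ⟨u - v, by omega, by omega, Or.inr ?_⟩
        have e : v + (u - v) = u := by omega
        rw [e, Nat.mod_eq_of_lt hu]
      · refine ⟨2*p+2 - (u-v), by omega, by omega, Or.inl ?_⟩
        have e : u + (2*p+2 - (u-v)) = v + (2*p+2) := by omega
        rw [e, Nat.add_mod_right, Nat.mod_eq_of_lt hv]

lemma mem_faces (p : ℕ) (σ : Finset ℕ) :
    σ ∈ facesCnp (2*p+2) p ↔
      σ ⊆ Finset.range (2*p+2) ∧ ∃ i, i ≤ p ∧ i ∉ σ ∧ i + p + 1 ∉ σ := by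
  constructor
  · rintro ⟨hσ, u, hu, v, hv, hne, hnadj⟩
    rw [Finset.mem_sdiff, Finset.mem_range] at hu hv
    rw [adj_iff p u v hu.1 hv.1 hne, not_not] at hnadj
    refine ⟨hσ, ?_⟩
    rcases hnadj with h | h
    · exact ⟨u, by omega, hu.2, by rw [show u + p + 1 = v by omega]; exact hv.2⟩
    · exact ⟨v, by omega, hv.2, by rw [show v + p + 1 = u by omega]; exact hu.2⟩
  · rintro ⟨hσ, i, hi, h1, h2⟩
    refine ⟨hσ, i, ?_, i + p + 1, ?_, by omega, ?_⟩
    · rw [Finset.mem_sdiff, Finset.mem_range]; exact ⟨by omega, h1⟩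
    · rw [Finset.mem_sdiff, Finset.mem_range]; exact ⟨by omega, h2⟩
    · rw [adj_iff p _ _ (by omega) (by omega) (by omega), not_not]
      exact Or.inl (by omega)

/-- The candidate description of `𝒞_k` for `1 ≤ k ≤ p+1`. -/
def Dset (p k : ℕ) : Set (Finset ℕ) :=
  {σ | σ ⊆ Finset.range (2*p+2) ∧ 0 ∉ σ ∧
    (∀ j, 1 ≤ j → j < k → j ∈ σ) ∧
    (∀ j, p+1 ≤ j → j ≤ p+k → j ∉ σ) ∧
    (∀ i, k ≤ i → i ≤ p → i ∈ σ ∨ i + p + 1 ∈ σ)}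

lemma mem_Dset (p k : ℕ) (σ : Finset ℕ) :
    σ ∈ Dset p k ↔ (σ ⊆ Finset.range (2*p+2) ∧ 0 ∉ σ ∧
      (∀ j, 1 ≤ j → j < k → j ∈ σ) ∧
      (∀ j, p+1 ≤ j → j ≤ p+k → j ∉ σ) ∧
      (∀ i, k ≤ i → i ≤ p → i ∈ σ ∨ i + p + 1 ∈ σ)) := Iff.rfl

lemma step0 (p : ℕ) :
    matchSeqCnp (2*p+2) p 1 = Dset p 1 := by
  ext σ
  rw [mem_matchSeq_succ]
  show σ ∈ facesCnp (2*p+2) p ∧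
      ¬(σ.erase 0 ∈ facesCnp (2*p+2) p ∧ insert 0 σ ∈ facesCnp (2*p+2) p) ↔ _
  rw [mem_Dset]
  constructor
  · rintro ⟨hf, hn⟩
    have herase : σ.erase 0 ∈ facesCnp (2*p+2) p := by
      rw [mem_faces] at hf ⊢
      obtain ⟨hσ, i, hi, h1, h2⟩ := hf
      exact ⟨(Finset.erase_subset 0 σ).trans hσ, i, hi,
        fun h => h1 (Finset.mem_of_mem_erase h),
        fun h => h2 (Finset.mem_of_mem_erase h)⟩
    have hins : insert 0 σ ∉ facesCnp (2*p+2) p := fun h => hn ⟨herase, h⟩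
    rw [mem_faces] at hf hins
    obtain ⟨hσ, i0, hi0, h1, h2⟩ := hf
    push_neg at hins
    have hpair : ∀ i, 1 ≤ i → i ≤ p → i ∈ σ ∨ i + p + 1 ∈ σ := by
      intro i h1i h2i
      by_contra hc
      push_neg at hc
      have hni : i ∉ insert 0 σ := by
        rw [Finset.mem_insert]; push_neg; exact ⟨by omega, hc.1⟩
      have := hins (Finset.insert_subset (Finset.mem_range.mpr (by omega)) hσ) i h2i hni
      rw [Finset.mem_insert] at this
      rcases this with h | h
      · omega
      · exact hc.2 h
    have hi0' : i0 = 0 := by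
      by_contra hc
      rcases hpair i0 (by omega) hi0 with h | h
      · exact h1 h
      · exact h2 h
    subst hi0'
    refine ⟨hσ, h1, by omega, ?_, fun i hi hip => hpair i hi hip⟩
    intro j hj1 hj2
    have : j = p + 1 := by omega
    subst this
    simpa using h2
  · rintro ⟨hσ, h0, -, hforb, hpair⟩
    have hf : σ ∈ facesCnp (2*p+2) p := by
      rw [mem_faces]
      exact ⟨hσ, 0, by omega, h0, hforb (0+p+1) (by omega) (by omega)⟩
    refine ⟨hf, ?_⟩
    rintro ⟨-, hins⟩
    rw [mem_faces] at hins
    obtain ⟨-, i, hi, h1, h2⟩ := hins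
    rw [Finset.mem_insert] at h1 h2
    push_neg at h1 h2
    rcases hpair i (by omega) hi with h | h
    · exact h1.2 h
    · exact h2.2 h

lemma stepk (p k : ℕ) (hk1 : 1 ≤ k) (hkp : k ≤ p)
    (ih : matchSeqCnp (2*p+2) p k = Dset p k) :
    matchSeqCnp (2*p+2) p (k+1) = Dset p (k+1) := by
  ext σ
  rw [mem_matchSeq_succ, ih]
  constructor
  · rintro ⟨hD, hn⟩
    -- insert k σ ∈ Dset p k always
    obtain ⟨hσ, h0, hico, hforb, hpair⟩ := hD
    have hins : insert k σ ∈ Dset p k := by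
      refine ⟨Finset.insert_subset (Finset.mem_range.mpr (by omega)) hσ, ?_, ?_, ?_, ?_⟩
      · rw [Finset.mem_insert]; push_neg; exact ⟨by omega, h0⟩
      · intro j hj1 hj2
        exact Finset.mem_insert_of_mem (hico j hj1 hj2)
      · intro j hj1 hj2
        rw [Finset.mem_insert]; push_neg
        exact ⟨by omega, hforb j hj1 hj2⟩
      · intro i hi1 hi2
        rcases Nat.eq_or_lt_of_le hi1 with h | h
        · exact Or.inl (h ▸ Finset.mem_insert_self k σ)
        · rcases hpair i (by omega) hi2 with h' | h'
          · exact Or.inl (Finset.mem_insert_of_mem h')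
          · exact Or.inr (Finset.mem_insert_of_mem h')
    have hkp1 : k + p + 1 ∉ σ := by
      intro hmem
      apply hn
      refine ⟨⟨(Finset.erase_subset k σ).trans hσ,
        fun h => h0 (Finset.mem_of_mem_erase h), ?_, ?_, ?_⟩, hins⟩
      · intro j hj1 hj2
        exact Finset.mem_erase.mpr ⟨by omega, hico j hj1 (by omega)⟩
      · intro j hj1 hj2 h
        exact hforb j hj1 hj2 (Finset.mem_of_mem_erase h)
      · intro i hi1 hi2
        rcases Nat.eq_or_lt_of_le hi1 with h | h
        · exact Or.inr (Finset.mem_erase.mpr ⟨by omega, h ▸ hmem⟩)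
        · rcases hpair i (by omega) hi2 with h' | h'
          · exact Or.inl (Finset.mem_erase.mpr ⟨by omega, h'⟩)
          · exact Or.inr (Finset.mem_erase.mpr ⟨by omega, h'⟩)
    have hkin : k ∈ σ := by
      rcases hpair k le_rfl hkp with h | h
      · exact h
      · exact absurd h hkp1
    refine ⟨hσ, h0, ?_, ?_, fun i hi1 hi2 => hpair i (by omega) hi2⟩
    · intro j hj1 hj2
      rcases Nat.lt_or_ge j k with h | h
      · exact hico j hj1 h
      · have : j = k := by omega
        exact this ▸ hkin
    · intro j hj1 hj2
      rcases Nat.lt_or_ge j (p+k+1) with h | h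
      · exact hforb j hj1 (by omega)
      · have : j = k + p + 1 := by omega
        exact this ▸ hkp1
  · rintro ⟨hσ, h0, hico, hforb, hpair⟩
    have hkin : k ∈ σ := hico k hk1 (by omega)
    have hkp1 : k + p + 1 ∉ σ := hforb (k+p+1) (by omega) (by omega)
    have hD : σ ∈ Dset p k := by
      refine ⟨hσ, h0, fun j hj1 hj2 => hico j hj1 (by omega),
        fun j hj1 hj2 => hforb j hj1 (by omega), ?_⟩
      intro i hi1 hi2
      rcases Nat.eq_or_lt_of_le hi1 with h | h
      · exact Or.inl (h ▸ hkin)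
      · exact hpair i (by omega) hi2
    refine ⟨hD, ?_⟩
    rintro ⟨⟨-, -, -, -, hpair'⟩, -⟩
    rcases hpair' k le_rfl hkp with h | h
    · exact absurd h (Finset.notMem_erase k σ)
    · exact hkp1 (Finset.mem_of_mem_erase h)

/-- Lemma 3.6: for `p ≥ 1` and `n = 2p+2`, the set `{1, 2, …, p}` is the unique
face of `Δᵗ₂(C_{2p+2}^p)` surviving to `𝒞_{p+1}`. -/
theorem stmt8 (p : ℕ) (hp : 1 ≤ p) :
    matchSeqCnp (2 * p + 2) p (p + 1) = {Finset.Icc 1 p} := by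
  have key : ∀ k, k ≤ p → matchSeqCnp (2*p+2) p (k+1) = Dset p (k+1) := by
    intro k
    induction k with
    | zero => intro _; exact step0 p
    | succ k ih =>
      intro hk
      exact stepk p (k+1) (by omega) hk (ih (by omega))
  rw [key p le_rfl]
  ext σ
  rw [mem_Dset, Set.mem_singleton_iff]
  constructor
  · rintro ⟨hσ, h0, hico, hforb, -⟩
    ext x
    rw [Finset.mem_Icc]
    constructor
    · intro hx
      have hx2 : x < 2*p+2 := Finset.mem_range.mp (hσ hx)
      have hx0 : x ≠ 0 := fun h => h0 (h ▸ hx)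
      by_contra hc
      push_neg at hc
      exact hforb x (by omega) (by omega) hx
    · rintro ⟨h1, h2⟩
      exact hico x h1 (by omega)
  · rintro rfl
    refine ⟨?_, by simp, ?_, ?_, by omega⟩
    · intro x hx
      rw [Finset.mem_Icc] at hx
      rw [Finset.mem_range]
      omega
    · intro j hj1 hj2
      rw [Finset.mem_Icc]
      omega
    · intro j hj1 hj2
      rw [Finset.mem_Icc]
      omega
end

section
/- Let p ≥ 1 and n ≥ 3p+1. If σ ∈ 𝒞₁ and m_σ := max(σ^c), then σ^c ⊆ {0, m_σ−p, m_σ−p+1, …, m_σ} and σ ∈ 𝒞_{m_σ−p}. -/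
open Finset

lemma adjCnp_symm {n p u v : ℕ} (h : adjCnp n p u v) : adjCnp n p v u := by
  obtain ⟨h1, h2, h3, t, ht1, ht2, ht3⟩ := h
  exact ⟨h2, h1, h3.symm, t, ht1, ht2, ht3.symm⟩

lemma mod_char {x n r : ℕ} (hn : 0 < n) (hx : x < 2 * n) (h : x % n = r) :
    x = r ∨ x = n + r := by
  rcases lt_or_ge x n with h1 | h1
  · left; rwa [Nat.mod_eq_of_lt h1] at h
  · right
    rw [Nat.mod_eq_sub_mod h1, Nat.mod_eq_of_lt (by omega)] at h
    omega

lemma adj_elim {n p a b : ℕ} (hpn : p < n) (hab : a < b) (hbn : b < n)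
    (h : adjCnp n p a b) : b ≤ a + p ∨ a + n ≤ b + p := by
  obtain ⟨-, -, -, t, ht1, ht2, h3⟩ := h
  rcases h3 with h3 | h3
  · rcases mod_char (by omega) (by omega) h3 with h | h
    · left; omega
    · omega
  · rcases mod_char (by omega) (by omega) h3 with h | h
    · omega
    · right; omega

lemma adj_near {n p a b : ℕ} (hab : a < b) (hbn : b < n) (h : b ≤ a + p) :
    adjCnp n p a b := by
  refine ⟨by omega, hbn, by omega, b - a, by omega, by omega, Or.inl ?_⟩
  rw [Nat.add_sub_cancel' (le_of_lt hab)]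
  exact Nat.mod_eq_of_lt hbn

lemma adj_wrap {n p a b : ℕ} (hab : a < b) (hbn : b < n) (h : a + n ≤ b + p) :
    adjCnp n p a b := by
  refine ⟨by omega, hbn, by omega, n + a - b, by omega, by omega, Or.inr ?_⟩
  have hb : b + (n + a - b) = n + a := by omega
  rw [hb, Nat.add_mod_left, Nat.mod_eq_of_lt (by omega)]

/-- The key arithmetic contradiction: with `n ≥ 3p+1`, a vertex `k < m - p` cannot
be adjacent to both `m` (near the top) and `w` (the vertex nonadjacent to `0`). -/
lemma keyCnp {n p k w m : ℕ} (hn : 3 * p + 1 ≤ n) (hkm : k + p < m) (hmn : m < n)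
    (hwp : p < w) (hwn : w + p < n)
    (hkw : k ≠ w → adjCnp n p k w) (hwm : w ≠ m → adjCnp n p w m)
    (hkm' : adjCnp n p k m) : False := by
  have h1 := adj_elim (p := p) (by omega) (by omega) hmn hkm'
  have hk : k + n ≤ m + p := by omega
  have hkp : k < p := by omega
  have hkw' := adj_elim (p := p) (by omega) (show k < w by omega) (by omega)
    (hkw (by omega))
  have hw' : w ≤ k + p := by omega
  have hwm' := adj_elim (p := p) (by omega) (show w < m by omega) hmn
    (hwm (by omega))
  omega

lemma seq_mono (n p : ℕ) {i j : ℕ} (h : i ≤ j) :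
    matchSeqCnp n p j ⊆ matchSeqCnp n p i := by
  induction j with
  | zero =>
    have : i = 0 := by omega
    subst this; exact fun σ hσ => hσ
  | succ k ih =>
    rcases Nat.lt_or_ge i (k + 1) with h' | h'
    · exact fun σ hσ => ih (by omega) hσ.1
    · have : i = k + 1 := by omega
      subst this; exact fun σ hσ => hσ

/-- Proposition 3.9: let `n ≥ 3p+1`.  If `σ ∈ 𝒞₁` and `m_σ = max(σᶜ)`, then
`σᶜ ⊆ {0} ∪ {m_σ-p, m_σ-p+1, …, m_σ}` and `σ ∈ 𝒞_{m_σ-p}`. -/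
theorem stmt10 (p n : ℕ) (hp : 1 ≤ p) (hn : 3 * p + 1 ≤ n)
    (σ : Finset ℕ) (hσ : σ ∈ matchSeqCnp n p 1)
    (m : ℕ) (hm : (Finset.range n \ σ).max = (m : WithBot ℕ)) :
    Finset.range n \ σ ⊆ insert 0 (Finset.Icc (m - p) m) ∧
      σ ∈ matchSeqCnp n p (m - p) := by
  have hn0 : 0 < n := by omega
  have hσ1 : σ ∈ matchSeqCnp n p 1 := hσ
  obtain ⟨hσ0, hnot⟩ := hσ
  have hσ0' : σ ∈ facesCnp n p := hσ0
  obtain ⟨hsub, u, hu, v, hv, huv, hnadj⟩ := hσ0'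
  -- erase 0 σ is always a face
  have h_er : σ.erase 0 ∈ facesCnp n p := by
    refine ⟨(erase_subset 0 σ).trans hsub, u, ?_, v, ?_, huv, hnadj⟩
    · exact mem_sdiff.2 ⟨(mem_sdiff.1 hu).1,
        fun h => (mem_sdiff.1 hu).2 (mem_of_mem_erase h)⟩
    · exact mem_sdiff.2 ⟨(mem_sdiff.1 hv).1,
        fun h => (mem_sdiff.1 hv).2 (mem_of_mem_erase h)⟩
  have hins : insert 0 σ ∉ facesCnp n p := fun h => hnot ⟨h_er, h⟩
  -- σᶜ ∖ {0} is a clique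
  have hcl : ∀ a ∈ Finset.range n \ insert 0 σ, ∀ b ∈ Finset.range n \ insert 0 σ,
      a ≠ b → adjCnp n p a b := by
    intro a ha b hb hab
    by_contra hab'
    exact hins ⟨insert_subset_iff.2 ⟨mem_range.2 hn0, hsub⟩, a, ha, b, hb, hab, hab'⟩
  have memins : ∀ x, x ∈ Finset.range n \ σ → x ≠ 0 →
      x ∈ Finset.range n \ insert 0 σ := by
    intro x hx hx0
    rw [mem_sdiff] at hx ⊢
    rw [mem_insert]
    tauto
  -- extract w: a vertex of σᶜ nonadjacent to 0
  have hwex : 0 ∈ Finset.range n \ σ ∧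
      ∃ w, w ∈ Finset.range n \ σ ∧ w ≠ 0 ∧ ¬ adjCnp n p 0 w := by
    by_cases hu0 : u = 0
    · subst hu0
      exact ⟨hu, v, hv, Ne.symm huv, hnadj⟩
    · by_cases hv0 : v = 0
      · subst hv0
        exact ⟨hv, u, hu, huv, fun h => hnadj (adjCnp_symm h)⟩
      · exact absurd (hcl u (memins u hu hu0) v (memins v hv hv0) huv) hnadj
  obtain ⟨h0S, w, hwS, hw0, hwadj⟩ := hwex
  have hwn : w < n := mem_range.1 (mem_sdiff.1 hwS).1
  have hwp : p < w := by
    by_contra h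
    exact hwadj (adj_near (by omega) hwn (by omega))
  have hwpn : w + p < n := by
    by_contra h
    exact hwadj (adj_wrap (by omega) hwn (by omega))
  have hmS : m ∈ Finset.range n \ σ := Finset.mem_of_max hm
  have hmn : m < n := mem_range.1 (mem_sdiff.1 hmS).1
  have hwm : w ≤ m := by
    have h := Finset.le_max hwS
    rw [hm] at h
    exact WithBot.coe_le_coe.1 h
  have hmp : p < m := lt_of_lt_of_le hwp hwm
  -- Part 1
  have part1 : Finset.range n \ σ ⊆ insert 0 (Finset.Icc (m - p) m) := by
    intro x hx
    rw [mem_insert, mem_Icc]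
    by_contra hcon
    push_neg at hcon
    obtain ⟨hx0, hx2⟩ := hcon
    have hxm : x ≤ m := by
      have h := Finset.le_max hx
      rw [hm] at h
      exact WithBot.coe_le_coe.1 h
    have hxlt : x + p < m := by
      rcases Nat.lt_or_ge x (m - p) with h | h
      · omega
      · have := hx2 h; omega
    have hadj_xm : adjCnp n p x m :=
      hcl x (memins x hx hx0) m (memins m hmS (by omega)) (by omega)
    exact keyCnp hn hxlt hmn hwp hwpn
      (fun hne => hcl x (memins x hx hx0) w (memins w hwS hw0) hne)
      (fun hne => hcl w (memins w hwS hw0) m (memins m hmS (by omega)) hne)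
      hadj_xm
  -- σ∖{k} is never in 𝒞₁ for 1 ≤ k < m - p
  have hErase : ∀ k, 1 ≤ k → k + p < m → σ.erase k ∉ matchSeqCnp n p 1 := by
    intro k hk1 hkm hmem
    have hkσ : k ∈ σ := by
      by_contra hkσ
      have hk' : k ∈ Finset.range n \ σ := mem_sdiff.2 ⟨mem_range.2 (by omega), hkσ⟩
      have := part1 hk'
      rw [mem_insert, mem_Icc] at this
      omega
    obtain ⟨-, hnot'⟩ := hmem
    apply hnot'
    constructor
    · -- erase 0 (erase k σ) is a face, witnessed by the pair (0, w)
      refine ⟨(erase_subset _ _).trans ((erase_subset _ _).trans hsub),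
        0, ?_, w, ?_, Ne.symm hw0, hwadj⟩
      · exact mem_sdiff.2 ⟨mem_range.2 hn0, notMem_erase 0 _⟩
      · refine mem_sdiff.2 ⟨mem_range.2 hwn, fun h => ?_⟩
        exact (mem_sdiff.1 hwS).2 (mem_of_mem_erase (mem_of_mem_erase h))
    · -- insert 0 (erase k σ) is a face, witnessed by (k, m) or (k, w)
      have hkT : k ∈ Finset.range n \ insert 0 (σ.erase k) := by
        rw [mem_sdiff, mem_insert]
        exact ⟨mem_range.2 (by omega), fun h => by
          rcases h with h | h
          · omega
          · exact (notMem_erase k σ) h⟩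
      have hmT : m ∈ Finset.range n \ insert 0 (σ.erase k) := by
        rw [mem_sdiff, mem_insert]
        refine ⟨mem_range.2 hmn, fun h => ?_⟩
        rcases h with h | h
        · omega
        · exact (mem_sdiff.1 hmS).2 (mem_of_mem_erase h)
      have hwT : w ∈ Finset.range n \ insert 0 (σ.erase k) := by
        rw [mem_sdiff, mem_insert]
        refine ⟨mem_range.2 hwn, fun h => ?_⟩
        rcases h with h | h
        · omega
        · exact (mem_sdiff.1 hwS).2 (mem_of_mem_erase h)
      have hsub' : insert 0 (σ.erase k) ⊆ Finset.range n :=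
        insert_subset_iff.2 ⟨mem_range.2 hn0, (erase_subset _ _).trans hsub⟩
      by_cases hkm' : adjCnp n p k m
      · -- then k is not adjacent to w
        have hkw' : ¬ adjCnp n p k w := fun h =>
          keyCnp hn hkm hmn hwp hwpn (fun _ => h)
            (fun hne => hcl w (memins w hwS hw0) m (memins m hmS (by omega)) hne)
            hkm'
        have hkw : k ≠ w := fun h => (mem_sdiff.1 hwS).2 (h ▸ hkσ)
        exact ⟨hsub', k, hkT, w, hwT, hkw, hkw'⟩
      · exact ⟨hsub', k, hkT, m, hmT, by omega, hkm'⟩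
  -- Part 2 by induction
  have main : ∀ k, 1 ≤ k → k ≤ m - p → σ ∈ matchSeqCnp n p k := by
    intro k
    induction k with
    | zero => omega
    | succ j ih =>
      intro _ hj
      by_cases hj0 : j = 0
      · subst hj0; exact hσ1
      · have hσj : σ ∈ matchSeqCnp n p j := ih (by omega) (by omega)
        refine ⟨hσj, fun hpair => ?_⟩
        exact hErase j (by omega) (by omega) (seq_mono n p (by omega) hpair.1)
  refine ⟨part1, ?_⟩
  rcases Nat.eq_zero_or_pos (m - p) with h | h
  · rw [h]
    exact seq_mono n p (by omega) hσ1
  · exact main (m - p) h le_rfl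
end

section
/- Let p ≥ 1 and n ≥ 3p+1. Then 𝒞_{n−p+1} = {τ}, where τ ⊆ {0,…,n−1} is the unique subset with τ^c = {0, n−2p, n−p}. -/
def nadj (n p u v : ℕ) : Prop :=
  (p < v - u ∧ v + p < u + n) ∨ (p < u - v ∧ u + p < v + n)

lemma nadj_symm {n p u v : ℕ} (h : nadj n p u v) : nadj n p v u := by
  unfold nadj at h ⊢; omega

lemma mod_two_cases {a n : ℕ} (h : a < n + n) : a % n = a ∨ a % n + n = a := by
  rcases Nat.lt_or_ge a n with h1 | h1
  · left; exact Nat.mod_eq_of_lt h1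
  · right
    rw [Nat.mod_eq_sub_mod h1, Nat.mod_eq_of_lt (by omega)]
    omega

lemma nadj_iff {n p u v : ℕ} (hp : 1 ≤ p) (hn : 3 * p + 1 ≤ n)
    (hu : u < n) (hv : v < n) :
    (u ≠ v ∧ ¬ adjCnp n p u v) ↔ nadj n p u v := by
  constructor
  · rintro ⟨hne, hna⟩
    rcases Nat.lt_or_ge u v with hlt | hge
    · left
      constructor
      · by_contra h
        exact hna ⟨hu, hv, hne, v - u, by omega, by omega,
          Or.inl (by rw [show u + (v - u) = v by omega, Nat.mod_eq_of_lt hv])⟩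
      · by_contra h
        exact hna ⟨hu, hv, hne, u + n - v, by omega, by omega,
          Or.inr (by rw [show v + (u + n - v) = u + n by omega, Nat.add_mod_right,
            Nat.mod_eq_of_lt hu])⟩
    · have hlt : v < u := by omega
      right
      constructor
      · by_contra h
        exact hna ⟨hu, hv, hne, u - v, by omega, by omega,
          Or.inr (by rw [show v + (u - v) = u by omega, Nat.mod_eq_of_lt hu])⟩
      · by_contra h
        exact hna ⟨hu, hv, hne, v + n - u, by omega, by omega,
          Or.inl (by rw [show u + (v + n - u) = v + n by omega, Nat.add_mod_right,
            Nat.mod_eq_of_lt hv])⟩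
  · intro h
    refine ⟨by unfold nadj at h; omega, ?_⟩
    rintro ⟨-, -, -, t, ht1, ht2, hm | hm⟩
    · have := mod_two_cases (n := n) (a := u + t) (by omega)
      unfold nadj at h; omega
    · have := mod_two_cases (n := n) (a := v + t) (by omega)
      unfold nadj at h; omega

def PG (n p i : ℕ) (σ : Finset ℕ) : Prop :=
  σ ⊆ Finset.range n ∧ 0 ∉ σ ∧
  (∀ x < n, x ∉ σ → x = 0 ∨ i ≤ x) ∧
  (∀ u < n, u ∉ σ → ∀ v < n, v ∉ σ → u ≠ 0 → v ≠ 0 → ¬ nadj n p u v) ∧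
  (∀ j < i, ∃ w < n, w ∉ σ ∧ w ≠ 0 ∧ nadj n p j w)

def PD (n p i : ℕ) (σ : Finset ℕ) : Prop :=
  σ ⊆ Finset.range n ∧ 0 ∉ σ ∧
  ∃ a, n - 2 * p ≤ a ∧ a < i ∧ a ∉ σ ∧ a + p ∉ σ ∧
    (∀ x < n, x ∉ σ → x = 0 ∨ x = a ∨ x = a + p ∨ (n - p ≤ x ∧ x < a + p))

lemma matchSeq_succ (n p i : ℕ) : matchSeqCnp n p (i + 1) =
    {σ ∈ matchSeqCnp n p i |
      ¬(σ.erase i ∈ matchSeqCnp n p i ∧ insert i σ ∈ matchSeqCnp n p i)} := rfl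

lemma faces_iff {n p : ℕ} (hp : 1 ≤ p) (hn : 3 * p + 1 ≤ n) (σ : Finset ℕ) :
    σ ∈ facesCnp n p ↔ σ ⊆ Finset.range n ∧
      ∃ u, u < n ∧ u ∉ σ ∧ ∃ v, v < n ∧ v ∉ σ ∧ nadj n p u v := by
  unfold facesCnp
  simp only [Set.mem_setOf_eq, Finset.mem_sdiff, Finset.mem_range]
  constructor
  · rintro ⟨hs, u, ⟨hu, hu2⟩, v, ⟨hv, hv2⟩, hne⟩
    exact ⟨hs, u, hu, hu2, v, hv, hv2, (nadj_iff hp hn hu hv).1 hne⟩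
  · rintro ⟨hs, u, hu, hu2, v, hv, hv2, hne⟩
    exact ⟨hs, u, ⟨hu, hu2⟩, v, ⟨hv, hv2⟩, (nadj_iff hp hn hu hv).2 hne⟩

lemma base_case {n p : ℕ} (hp : 1 ≤ p) (hn : 3 * p + 1 ≤ n) :
    matchSeqCnp n p 1 = {σ | PG n p 1 σ ∨ PD n p 1 σ} := by
  have h0n : 0 < n := by omega
  ext σ
  rw [show (1 : ℕ) = 0 + 1 from rfl, matchSeq_succ]
  simp only [Set.mem_setOf_eq, Set.mem_sep_iff]
  show (σ ∈ facesCnp n p ∧ ¬(σ.erase 0 ∈ facesCnp n p ∧ insert 0 σ ∈ facesCnp n p))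
      ↔ _
  rw [faces_iff hp hn, faces_iff hp hn, faces_iff hp hn]
  constructor
  · rintro ⟨⟨hs, u, hu, hu2, v, hv, hv2, hne⟩, hun⟩
    -- first : 0 ∉ σ
    have h0σ : 0 ∉ σ := by
      by_contra h0
      exact hun ⟨⟨(Finset.erase_subset _ _).trans hs,
          u, hu, fun hh => hu2 (Finset.mem_of_mem_erase hh),
          v, hv, fun hh => hv2 (Finset.mem_of_mem_erase hh), hne⟩,
        by rw [Finset.insert_eq_self.2 h0]; exact ⟨hs, u, hu, hu2, v, hv, hv2, hne⟩⟩
    -- clique on σᶜ ∖ {0}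
    have hcl : ∀ a < n, a ∉ σ → ∀ b < n, b ∉ σ → a ≠ 0 → b ≠ 0 → ¬ nadj n p a b := by
      intro a ha ha2 b hb hb2 ha0 hb0 hnadj
      refine hun ⟨⟨(Finset.erase_subset _ _).trans hs,
          u, hu, fun hh => hu2 (Finset.mem_of_mem_erase hh),
          v, hv, fun hh => hv2 (Finset.mem_of_mem_erase hh), hne⟩,
        ⟨Finset.insert_subset (by simpa using h0n) hs,
          a, ha, by simp [ha0, ha2], b, hb, by simp [hb0, hb2], hnadj⟩⟩
    left
    refine ⟨hs, h0σ, fun x _ _ => by omega, hcl, ?_⟩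
    intro j hj
    interval_cases j
    by_cases hu0 : u = 0
    · subst hu0
      exact ⟨v, hv, hv2, by unfold nadj at hne; omega, hne⟩
    · by_cases hv0 : v = 0
      · refine ⟨u, hu, hu2, hu0, ?_⟩
        have := nadj_symm hne
        rwa [hv0] at this
      · exact absurd hne (hcl u hu hu2 v hv hv2 hu0 hv0)
  · rintro (⟨hs, h0σ, helem, hcl, hwit⟩ | ⟨_, _, a, ha1, ha2, _⟩)
    · obtain ⟨w, hw, hw2, hw0, hnadj⟩ := hwit 0 (by omega)
      refine ⟨⟨hs, 0, h0n, h0σ, w, hw, hw2, hnadj⟩, ?_⟩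
      rintro ⟨-, hins⟩
      obtain ⟨-, a, ha, ha2, b, hb, hb2, hne⟩ := hins
      simp only [Finset.mem_insert, not_or] at ha2 hb2
      exact hcl a ha ha2.2 b hb hb2.2 ha2.1 hb2.1 hne
    · omega

lemma step_case {n p i : ℕ} (hp : 1 ≤ p) (hn : 3 * p + 1 ≤ n) (hi1 : 1 ≤ i)
    (hi2 : i + 1 ≤ n - p)
    (IH : matchSeqCnp n p i = {σ | PG n p i σ ∨ PD n p i σ}) :
    matchSeqCnp n p (i + 1) = {σ | PG n p (i + 1) σ ∨ PD n p (i + 1) σ} := by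
  have hin : i < n := by omega
  ext σ
  rw [matchSeq_succ, IH]
  simp only [Set.mem_setOf_eq, Set.mem_sep_iff]
  constructor
  · rintro ⟨hσ | hσ, hun⟩
    · obtain ⟨hs, h0, helem, hcl, hwit⟩ := hσ
      by_cases hiσ : i ∈ σ
      · -- i ∈ σ : show PG (i+1)
        left
        have hPGe : ¬ PG n p i (σ.erase i) := by
          intro h
          exact hun ⟨Or.inl h, by
            rw [Finset.insert_eq_self.2 hiσ]
            exact Or.inl ⟨hs, h0, helem, hcl, hwit⟩⟩
        have hA : σ.erase i ⊆ Finset.range n := (Finset.erase_subset _ _).trans hs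
        have hB : (0:ℕ) ∉ σ.erase i := fun h => h0 (Finset.mem_of_mem_erase h)
        have hC : ∀ x < n, x ∉ σ.erase i → x = 0 ∨ i ≤ x := by
          intro x hx hx2
          have hx2' : x = i ∨ x ∉ σ := by
            simp only [Finset.mem_erase, not_and] at hx2; tauto
          rcases hx2' with h | h
          · omega
          · exact helem x hx h
        have hE : ∀ j < i, ∃ w < n, w ∉ σ.erase i ∧ w ≠ 0 ∧ nadj n p j w := by
          intro j hj
          obtain ⟨w, h1, h2, h3, h4⟩ := hwit j hj
          exact ⟨w, h1, fun hh => h2 (Finset.mem_of_mem_erase hh), h3, h4⟩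
        have hD : ¬ (∀ u < n, u ∉ σ.erase i → ∀ v < n, v ∉ σ.erase i →
            u ≠ 0 → v ≠ 0 → ¬ nadj n p u v) := fun hD => hPGe ⟨hA, hB, hC, hD, hE⟩
        push_neg at hD
        obtain ⟨u, hu, hu2, v, hv, hv2, hu0, hv0, hnadj⟩ := hD
        have hu2' : u = i ∨ u ∉ σ := by
          simp only [Finset.mem_erase, not_and] at hu2; tauto
        have hv2' : v = i ∨ v ∉ σ := by
          simp only [Finset.mem_erase, not_and] at hv2; tauto
        have hw : ∃ w, w < n ∧ w ∉ σ ∧ w ≠ 0 ∧ nadj n p i w := by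
          rcases hu2' with hu' | hu' <;> rcases hv2' with hv' | hv'
          · exfalso; rw [hu', hv'] at hnadj; unfold nadj at hnadj; omega
          · exact ⟨v, hv, hv', hv0, by rwa [hu'] at hnadj⟩
          · exact ⟨u, hu, hu', hu0, by rw [hv'] at hnadj; exact nadj_symm hnadj⟩
          · exact absurd hnadj (hcl u hu hu' v hv hv' hu0 hv0)
        obtain ⟨w, hw1, hw2, hw3, hw4⟩ := hw
        refine ⟨hs, h0, ?_, hcl, ?_⟩
        · intro x hx hx2
          have h1 := helem x hx hx2
          have h2 : x ≠ i := fun hh => (hh ▸ hx2) hiσ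
          omega
        · intro j hj
          rcases Nat.lt_or_ge j i with h | h
          · exact hwit j h
          · have hji : j = i := by omega
            subst hji
            exact ⟨w, hw1, hw2, hw3, hw4⟩
      · -- i ∉ σ : show PD (i+1) with a = i
        right
        have herase : σ.erase i = σ := Finset.erase_eq_self.2 hiσ
        have hPGi : ¬ PG n p i (insert i σ) := by
          intro h
          exact hun ⟨by rw [herase]; exact Or.inl ⟨hs, h0, helem, hcl, hwit⟩, Or.inl h⟩
        have hA : insert i σ ⊆ Finset.range n :=
          Finset.insert_subset (Finset.mem_range.2 hin) hs
        have hB : (0:ℕ) ∉ insert i σ := by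
          simp only [Finset.mem_insert, not_or]
          exact ⟨by omega, h0⟩
        have hC : ∀ x < n, x ∉ insert i σ → x = 0 ∨ i ≤ x := by
          intro x hx hx2
          simp only [Finset.mem_insert, not_or] at hx2
          exact helem x hx hx2.2
        have hD : ∀ u < n, u ∉ insert i σ → ∀ v < n, v ∉ insert i σ →
            u ≠ 0 → v ≠ 0 → ¬ nadj n p u v := by
          intro u hu hu2 v hv hv2 hu0 hv0
          simp only [Finset.mem_insert, not_or] at hu2 hv2
          exact hcl u hu hu2.2 v hv hv2.2 hu0 hv0
        have hE : ¬ (∀ j < i, ∃ w < n, w ∉ insert i σ ∧ w ≠ 0 ∧ nadj n p j w) :=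
          fun hE => hPGi ⟨hA, hB, hC, hD, hE⟩
        push_neg at hE
        obtain ⟨j, hj, hjall⟩ := hE
        obtain ⟨w0, hw01, hw02, hw03, hw04⟩ := hwit j hj
        have hw0i : w0 = i := by
          by_contra hne
          exact hjall w0 hw01
            (by simp only [Finset.mem_insert, not_or]; exact ⟨hne, hw02⟩) hw03 hw04
        subst hw0i
        have hrange : ∀ x, x < n → x ∉ σ → x ≠ 0 → x ≠ w0 →
            n - p ≤ x ∧ x ≤ w0 + p := by
          intro x hx hx2 hx0 hxi
          have h1 : ¬ nadj n p j x := hjall x hx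
            (by simp only [Finset.mem_insert, not_or]; exact ⟨hxi, hx2⟩) hx0
          have h2 : ¬ nadj n p w0 x := hcl w0 hw01 hw02 x hx hx2 (by omega) hx0
          have h3 := helem x hx hx2
          unfold nadj at h1 h2 hw04
          omega
        obtain ⟨w1, hw11, hw12, hw13, hw14⟩ := hwit (w0 - 1) (by omega)
        have hw1ne : w1 ≠ w0 := by
          intro hh; rw [hh] at hw14; unfold nadj at hw14; omega
        have hr1 := hrange w1 hw11 hw12 hw13 hw1ne
        have hw1eq : w1 = w0 + p := by unfold nadj at hw14; omega
        rw [hw1eq] at hw12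
        refine ⟨hs, h0, w0, by omega, by omega, hw02, hw12, ?_⟩
        intro x hx hx2
        by_cases hx0 : x = 0
        · left; exact hx0
        by_cases hxi : x = w0
        · right; left; exact hxi
        · have := hrange x hx hx2 hx0 hxi
          omega
    · -- PD i σ : weaken to PD (i+1)
      right
      obtain ⟨hs, h0, a, ha1, ha2, ha3, ha4, hchar⟩ := hσ
      exact ⟨hs, h0, a, ha1, by omega, ha3, ha4, hchar⟩
  · rintro (hσ | hσ)
    · -- PG (i+1) σ
      obtain ⟨hs, h0, helem, hcl, hwit⟩ := hσ
      have hiσ : i ∈ σ := by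
        by_contra h
        have := helem i hin h
        omega
      refine ⟨Or.inl ⟨hs, h0,
        fun x hx hx2 => by have := helem x hx hx2; omega,
        hcl, fun j hj => hwit j (by omega)⟩, ?_⟩
      rintro ⟨he, -⟩
      obtain ⟨w, hw1, hw2, hw3, hw4⟩ := hwit i (by omega)
      rcases he with hePG | hePD
      · obtain ⟨-, -, -, hcl', -⟩ := hePG
        have hiC : i ∉ σ.erase i := by simp
        have hwC : w ∉ σ.erase i := fun hh => hw2 (Finset.mem_of_mem_erase hh)
        exact hcl' i hin hiC w hw1 hwC (by omega) hw3 hw4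
      · obtain ⟨-, -, a, ha1, ha2, ha3, ha4, hchar⟩ := hePD
        have hiC : i ∉ σ.erase i := by simp
        have := hchar i hin hiC
        omega
    · -- PD (i+1) σ
      obtain ⟨hs, h0, a, ha1, ha2, ha3, ha4, hchar⟩ := hσ
      rcases Nat.lt_or_ge a i with hai | hai
      · -- a < i
        refine ⟨Or.inr ⟨hs, h0, a, ha1, hai, ha3, ha4, hchar⟩, ?_⟩
        rintro ⟨he, -⟩
        have hiσ : i ∈ σ := by
          by_contra h
          have := hchar i hin h
          omega
        rcases he with hePG | hePD
        · obtain ⟨-, -, helem', -, -⟩ := hePG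
          have haC : a ∉ σ.erase i := fun hh => ha3 (Finset.mem_of_mem_erase hh)
          have := helem' a (by omega) haC
          omega
        · obtain ⟨-, -, a', hb1, hb2, hb3, hb4, hchar'⟩ := hePD
          have hiC : i ∉ σ.erase i := by simp
          have := hchar' i hin hiC
          omega
      · -- a = i
        have hai' : a = i := by omega
        subst hai'
        have hPGσ : PG n p a σ := by
          refine ⟨hs, h0, ?_, ?_, ?_⟩
          · intro x hx hx2
            have := hchar x hx hx2
            omega
          · intro u hu hu2 v hv hv2 hu0 hv0
            have h1 := hchar u hu hu2
            have h2 := hchar v hv hv2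
            unfold nadj; omega
          · intro j hj
            by_cases hcase : a + 2 * p < j + n
            · exact ⟨a + p, by omega, ha4, by omega, by unfold nadj; omega⟩
            · exact ⟨a, by omega, ha3, by omega, by unfold nadj; omega⟩
        refine ⟨Or.inl hPGσ, ?_⟩
        rintro ⟨-, hins⟩
        have haσ : a ∉ σ := ha3
        rcases hins with hiPG | hiPD
        · obtain ⟨-, -, -, -, hwit'⟩ := hiPG
          obtain ⟨w, hw1, hw2, hw3, hw4⟩ := hwit' 0 (by omega)
          simp only [Finset.mem_insert, not_or] at hw2
          obtain ⟨hwi, hwσ⟩ := hw2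
          have := hchar w hw1 hwσ
          unfold nadj at hw4
          omega
        · obtain ⟨-, -, a', hb1, hb2, hb3, hb4, hchar'⟩ := hiPD
          have hCip : a + p ∉ insert a σ := by
            simp only [Finset.mem_insert, not_or]
            exact ⟨by omega, ha4⟩
          have := hchar' (a + p) (by omega) hCip
          omega

lemma inv_lemma {n p : ℕ} (hp : 1 ≤ p) (hn : 3 * p + 1 ≤ n) :
    ∀ i, 1 ≤ i → i ≤ n - p →
      matchSeqCnp n p i = {σ | PG n p i σ ∨ PD n p i σ} := by
  intro i
  induction i with
  | zero => intro h1 _; exact absurd h1 (by omega)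
  | succ i ih =>
    intro h1 h2
    by_cases hi0 : i = 0
    · subst hi0
      exact base_case hp hn
    · exact step_case hp hn (by omega) h2 (ih (by omega) (by omega))

lemma PG_empty {n p : ℕ} (hp : 1 ≤ p) (hn : 3 * p + 1 ≤ n) (σ : Finset ℕ) :
    ¬ PG n p (n - p) σ := by
  rintro ⟨-, -, helem, -, hwit⟩
  obtain ⟨w, hw1, hw2, hw3, hw4⟩ := hwit 0 (by omega)
  have := helem w hw1 hw2
  unfold nadj at hw4
  omega

/-- Lemma 3.12: for `p ≥ 1` and `n ≥ 3p+1`, `𝒞_{n-p+1} = {τ}` where `τ` is the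
unique subset of `{0,…,n-1}` with complement `τᶜ = {0, n-2p, n-p}`. -/
theorem stmt14 (p n : ℕ) (hp : 1 ≤ p) (hn : 3 * p + 1 ≤ n) :
    matchSeqCnp n p (n - p + 1) = {Finset.range n \ {0, n - 2 * p, n - p}} := by
  have hmem : ∀ x, x ∈ Finset.range n \ ({0, n - 2 * p, n - p} : Finset ℕ) ↔
      x < n ∧ ¬(x = 0 ∨ x = n - 2 * p ∨ x = n - p) := by
    intro x
    simp [Finset.mem_sdiff, Finset.mem_range, Finset.mem_insert]
  rw [matchSeq_succ, inv_lemma hp hn (n - p) (by omega) le_rfl]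
  ext σ
  simp only [Set.mem_setOf_eq, Set.mem_sep_iff, Set.mem_singleton_iff]
  constructor
  · rintro ⟨hσ | hσ, hun⟩
    · exact absurd hσ (PG_empty hp hn σ)
    obtain ⟨hs, h0, a, ha1, ha2, ha3, ha4, hchar⟩ := hσ
    rcases Nat.eq_or_lt_of_le ha1 with haeq | halt
    · -- a = n - 2p : σ is τ
      ext x
      rw [hmem x]
      constructor
      · intro hx
        refine ⟨Finset.mem_range.1 (hs hx), ?_⟩
        rintro (h | h | h)
        · exact h0 (h ▸ hx)
        · have hxa : x = a := by omega
          exact ha3 (hxa ▸ hx)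
        · have hxa : x = a + p := by omega
          exact ha4 (hxa ▸ hx)
      · rintro ⟨hx, hne⟩
        by_contra h
        have := hchar x hx h
        omega
    · -- a > n - 2p : matched, contradiction
      exfalso
      apply hun
      have hnpn : n - p < n := by omega
      constructor
      · right
        refine ⟨(Finset.erase_subset _ _).trans hs,
          fun h => h0 (Finset.mem_of_mem_erase h), a, ha1, ha2,
          fun h => ha3 (Finset.mem_of_mem_erase h),
          fun h => ha4 (Finset.mem_of_mem_erase h), ?_⟩
        intro x hx hx2
        have hx2' : x = n - p ∨ x ∉ σ := by
          simp only [Finset.mem_erase, not_and] at hx2; tauto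
        rcases hx2' with h | h
        · right; right; right; omega
        · exact hchar x hx h
      · right
        refine ⟨Finset.insert_subset (Finset.mem_range.2 hnpn) hs, ?_, a, ha1, ha2,
          ?_, ?_, ?_⟩
        · simp only [Finset.mem_insert, not_or]
          exact ⟨by omega, h0⟩
        · simp only [Finset.mem_insert, not_or]
          exact ⟨by omega, ha3⟩
        · simp only [Finset.mem_insert, not_or]
          exact ⟨by omega, ha4⟩
        · intro x hx hx2
          simp only [Finset.mem_insert, not_or] at hx2
          exact hchar x hx hx2.2
  · intro hσ
    subst hσ
    have hch : ∀ x, x < n → x ∉ Finset.range n \ ({0, n - 2 * p, n - p} : Finset ℕ) →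
        x = 0 ∨ x = n - 2 * p ∨ x = n - p := by
      intro x hx hx2
      rcases Decidable.em (x = 0 ∨ x = n - 2 * p ∨ x = n - p) with h | h
      · exact h
      · exact absurd ((hmem x).2 ⟨hx, h⟩) hx2
    have h0τ : (0 : ℕ) ∉ Finset.range n \ ({0, n - 2 * p, n - p} : Finset ℕ) := by
      rw [hmem]; omega
    have haτ : n - 2 * p ∉ Finset.range n \ ({0, n - 2 * p, n - p} : Finset ℕ) := by
      rw [hmem]; omega
    have hbτ : n - p ∉ Finset.range n \ ({0, n - 2 * p, n - p} : Finset ℕ) := by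
      rw [hmem]; omega
    refine ⟨Or.inr ⟨Finset.sdiff_subset, h0τ, n - 2 * p, le_rfl, by omega, haτ,
      by rw [show n - 2 * p + p = n - p by omega]; exact hbτ, ?_⟩, ?_⟩
    · intro x hx hx2
      have := hch x hx hx2
      omega
    · rintro ⟨-, hins⟩
      rcases hins with hiPG | hiPD
      · exact PG_empty hp hn _ hiPG
      · obtain ⟨-, -, a', hb1, hb2, hb3, hb4, -⟩ := hiPD
        simp only [Finset.mem_insert, not_or] at hb3 hb4
        have ha'1 : a' ∉ Finset.range n \ ({0, n - 2 * p, n - p} : Finset ℕ) := hb3.2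
        have ha'2 : a' = 0 ∨ a' = n - 2 * p ∨ a' = n - p :=
          hch a' (by omega) ha'1
        -- so a' = n - 2p, hence a' + p = n - p, but a' + p ≠ n - p is impossible
        have : a' + p = n - p := by omega
        exact hb4.1 this
end
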